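/- arXiv:2007.14581 — 2 statements merged into one kernel-verified Lean document; each statement's English description precedes it below -/
import Mathlib

section
/- For square matrices W^{[0]}, ..., W^{[L-1]} evolving under the gradient flow dW^{[l]}/dt = -∂R/∂W^{[l]} of a differentiable loss R(W) depending only on the product W = W^{[L-1]}···W^{[0]}, the balancedness condition (W^{[l+1]})^T W^{[l+1]} = W^{[l]} (W^{[l]})^T is preserved for all time if it holds at initialization, since d/dt[(W^{[l+1]})^T W^{[l+1]} - W^{[l]}(W^{[l]})^T] = 0. -/
/-!
Write `g_l = ∂R/∂W^{[l]}`. Peeling `W^{[l+1]}` off the product above layer `l` and `W^{[l]}` off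
the product below layer `l + 1` gives `X := (W^{[l+1]})ᵀ g_{l+1} = g_l (W^{[l]})ᵀ`. Along the flow,
`d/dt (W^{[l+1]})ᵀ W^{[l+1]} = -(Xᵀ + X)` and `d/dt W^{[l]} (W^{[l]})ᵀ = -(X + Xᵀ)`, so their
difference is constant.
-/

open Matrix

/-- Product `W^{[L-1]} ⋯ W^{[l+1]}` of the factors strictly above layer `l`
(in descending order). -/
def prodAbove {d L : ℕ} (W : Fin L → Matrix (Fin d) (Fin d) ℝ) (l : Fin L) :
    Matrix (Fin d) (Fin d) ℝ :=
  (((List.finRange L).reverse.filter (fun k => l < k)).map W).prod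

/-- Product `W^{[l-1]} ⋯ W^{[0]}` of the factors strictly below layer `l`
(in descending order). -/
def prodBelow {d L : ℕ} (W : Fin L → Matrix (Fin d) (Fin d) ℝ) (l : Fin L) :
    Matrix (Fin d) (Fin d) ℝ :=
  (((List.finRange L).reverse.filter (fun k => k < l)).map W).prod

/-- The full product `W^{[L-1]} ⋯ W^{[0]}`. -/
def prodAll {d L : ℕ} (W : Fin L → Matrix (Fin d) (Fin d) ℝ) :
    Matrix (Fin d) (Fin d) ℝ :=
  (((List.finRange L).reverse).map W).prod

namespace List

variable {α : Type*} [LinearOrder α] {s : List α} {a : α}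

theorem SortedGT.filter_le_eq_cons (hs : s.SortedGT) (ha : a ∈ s) :
    s.filter (· ≤ a) = a :: s.filter (· < a) := by
  induction s with
  | nil => simp at ha
  | cons x s ih =>
    obtain ⟨hx, hs'⟩ := pairwise_cons.mp hs.pairwise
    rcases mem_cons.mp ha with rfl | ha'
    · rw [filter_cons_of_pos (by simp), filter_cons_of_neg (by simp)]
      exact congrArg _ (filter_congr fun y hy => by simp [hx y hy, (hx y hy).le])
    · have hax := hx a ha'
      simp [not_le.mpr hax, not_lt.mpr hax.le, ih hs'.sortedGT ha']

theorem SortedGT.filter_ge_eq_concat (hs : s.SortedGT) (ha : a ∈ s) :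
    s.filter (a ≤ ·) = s.filter (a < ·) ++ [a] := by
  induction s with
  | nil => simp at ha
  | cons x s ih =>
    obtain ⟨hx, hs'⟩ := pairwise_cons.mp hs.pairwise
    rcases mem_cons.mp ha with rfl | ha'
    · rw [filter_cons_of_pos (by simp), filter_cons_of_neg (by simp)]
      have hle : s.filter (a ≤ ·) = [] := filter_eq_nil_iff.mpr fun y hy => by simpa using hx y hy
      have hlt : s.filter (a < ·) = [] :=
        filter_eq_nil_iff.mpr fun y hy => by simpa using (hx y hy).le
      rw [hle, hlt, nil_append]
    · have hax := hx a ha'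
      simp [hax, hax.le, ih hs'.sortedGT ha']

end List

section LayerProducts

variable {d L : ℕ} (W : Fin L → Matrix (Fin d) (Fin d) ℝ) (l : Fin L) (hl : (l : ℕ) + 1 < L)

theorem prodBelow_succ : prodBelow W ⟨(l : ℕ) + 1, hl⟩ = W l * prodBelow W l := by
  have hs := (List.sortedLT_finRange L).reverse
  rw [prodBelow, prodBelow, List.filter_congr (q := (· ≤ l)) fun k _ => by
    simp only [decide_eq_decide, Fin.lt_def, Fin.le_def]; omega,
    hs.filter_le_eq_cons (by simp), List.map_cons, List.prod_cons]

theorem prodAbove_eq_prodAbove_succ_mul :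
    prodAbove W l = prodAbove W ⟨(l : ℕ) + 1, hl⟩ * W ⟨(l : ℕ) + 1, hl⟩ := by
  have hs := (List.sortedLT_finRange L).reverse
  rw [prodAbove, prodAbove, List.filter_congr (q := (⟨(l : ℕ) + 1, hl⟩ ≤ ·)) fun k _ => by
    simp only [decide_eq_decide, Fin.lt_def, Fin.le_def]; omega,
    hs.filter_ge_eq_concat (by simp), List.map_append, List.prod_append, List.map_singleton,
    List.prod_singleton]

end LayerProducts

/-- `∂R/∂W^{[l]}`, for `M = ∇_W R` evaluated at the product. -/
def layerGrad {d L : ℕ} (W : Fin L → Matrix (Fin d) (Fin d) ℝ) (M : Matrix (Fin d) (Fin d) ℝ)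
    (l : Fin L) : Matrix (Fin d) (Fin d) ℝ :=
  (prodAbove W l)ᵀ * M * (prodBelow W l)ᵀ

theorem transpose_mul_layerGrad_succ {d L : ℕ} (W : Fin L → Matrix (Fin d) (Fin d) ℝ)
    (M : Matrix (Fin d) (Fin d) ℝ) (l : Fin L) (hl : (l : ℕ) + 1 < L) :
    (W ⟨(l : ℕ) + 1, hl⟩)ᵀ * layerGrad W M ⟨(l : ℕ) + 1, hl⟩ = layerGrad W M l * (W l)ᵀ := by
  simp only [layerGrad, prodAbove_eq_prodAbove_succ_mul W l hl, prodBelow_succ W l hl,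
    transpose_mul, Matrix.mul_assoc]

section EntrywiseDeriv

variable {k m n p : Type*}

theorem hasDerivAt_matrix_mul_apply [Fintype n] {A : ℝ → Matrix m n ℝ} {B : ℝ → Matrix n p ℝ}
    {A' : Matrix m n ℝ} {B' : Matrix n p ℝ} {t : ℝ}
    (hA : ∀ i j, HasDerivAt (fun s => A s i j) (A' i j) t)
    (hB : ∀ i j, HasDerivAt (fun s => B s i j) (B' i j) t) (i : m) (j : p) :
    HasDerivAt (fun s => (A s * B s) i j) ((A' * B t + A t * B') i j) t := by
  simp only [Matrix.add_apply, Matrix.mul_apply, ← Finset.sum_add_distrib]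
  exact HasDerivAt.fun_sum fun r _ => (hA i r).mul (hB r j)

theorem transpose_mul_self_sub_mul_transpose_eq [Fintype k] [Fintype n] [Fintype p]
    {U : ℝ → Matrix k n ℝ} {V : ℝ → Matrix n p ℝ}
    {P : ℝ → Matrix k n ℝ} {Q : ℝ → Matrix n p ℝ}
    (hU : ∀ t i j, HasDerivAt (fun s => U s i j) (-P t i j) t)
    (hV : ∀ t i j, HasDerivAt (fun s => V s i j) (-Q t i j) t)
    (hPQ : ∀ t, (U t)ᵀ * P t = Q t * (V t)ᵀ) (t₀ t : ℝ) :
    (U t)ᵀ * U t - V t * (V t)ᵀ = (U t₀)ᵀ * U t₀ - V t₀ * (V t₀)ᵀ := by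
  have hderiv : ∀ s i j, HasDerivAt (fun u => ((U u)ᵀ * U u - V u * (V u)ᵀ) i j) 0 s := by
    intro s i j
    have hsum : (-P s)ᵀ * U s + (U s)ᵀ * -P s - (-Q s * (V s)ᵀ + V s * (-Q s)ᵀ) = 0 := by
      have hPQ' : (P s)ᵀ * U s = V s * (Q s)ᵀ := by
        simpa [transpose_mul] using congrArg transpose (hPQ s)
      simp only [transpose_neg, Matrix.neg_mul, Matrix.mul_neg, hPQ s, hPQ']
      abel
    rw [← Matrix.zero_apply (α := ℝ) i j, ← hsum]
    exact (hasDerivAt_matrix_mul_apply (fun i j => hU s j i) (hU s) i j).sub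
      (hasDerivAt_matrix_mul_apply (hV s) (fun i j => hV s j i) i j)
  ext i j
  exact is_const_of_deriv_eq_zero (fun s => (hderiv s i j).differentiableAt)
    (fun s => (hderiv s i j).deriv) t t₀

end EntrywiseDeriv

/-- Under the gradient flow `dW^{[l]}/dt = -∂R/∂W^{[l]}`, where
`∂R/∂W^{[l]} = (W^{[L-1]}⋯W^{[l+1]})ᵀ (∇_W R) (W^{[l-1]}⋯W^{[0]})ᵀ` with
`∇_W R` evaluated at the product matrix, the balancedness condition
`(W^{[l+1]})ᵀ W^{[l+1]} = W^{[l]} (W^{[l]})ᵀ` is preserved for all time if it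
holds at initialization. -/
theorem balancedness_preserved (d L : ℕ)
    (W : Fin L → ℝ → Matrix (Fin d) (Fin d) ℝ)
    (G : Matrix (Fin d) (Fin d) ℝ → Matrix (Fin d) (Fin d) ℝ)  -- ∇_W R
    (hflow : ∀ (l : Fin L) (t : ℝ) (i j : Fin d),
      HasDerivAt (fun s => W l s i j)
        (-(((prodAbove (fun k => W k t) l)ᵀ * G (prodAll (fun k => W k t)) *
            (prodBelow (fun k => W k t) l)ᵀ) i j)) t)
    (hbal0 : ∀ (l : Fin L) (hl : (l : ℕ) + 1 < L),
      (W ⟨(l : ℕ) + 1, hl⟩ 0)ᵀ * W ⟨(l : ℕ) + 1, hl⟩ 0 = W l 0 * (W l 0)ᵀ) :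
    ∀ (t : ℝ) (l : Fin L) (hl : (l : ℕ) + 1 < L),
      (W ⟨(l : ℕ) + 1, hl⟩ t)ᵀ * W ⟨(l : ℕ) + 1, hl⟩ t = W l t * (W l t)ᵀ := by
  intro t l hl
  have hgap := transpose_mul_self_sub_mul_transpose_eq (hflow ⟨(l : ℕ) + 1, hl⟩) (hflow l)
    (fun s => transpose_mul_layerGrad_succ (fun k => W k s) (G (prodAll fun k => W k s)) l hl) 0 t
  rwa [hbal0 l hl, sub_self, sub_eq_zero] at hgap
end

section
/- If square matrices W^{[0]}, ..., W^{[L-1]} satisfy the balancedness condition (W^{[l+1]})^T W^{[l+1]} = W^{[l]}(W^{[l]})^T for l = 0, ..., L-2, then all factors have the same singular values, and the singular values of the product W = W^{[L-1]}···W^{[0]} are the L-th powers of the common singular values of the factors. -/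
/-!
Balancedness `W_{l+1}ᵀ W_{l+1} = W_l W_lᵀ` says that consecutive Gram matrices `W_{l+1}ᵀ W_{l+1}`
and `W_lᵀ W_l` are of the form `A Aᵀ` and `Aᵀ A`, which share their characteristic polynomial; this
propagates along the chain. For the product, write `W = Q W_0` with `Q` the product of the
remaining factors; by induction `Qᵀ Q = (W_1ᵀ W_1)^(L-1) = (W_0 W_0ᵀ)^(L-1)`, and
`W_0ᵀ (W_0 W_0ᵀ)^(L-1) W_0 = (W_0ᵀ W_0)^L`.
-/

open Matrix

namespace Matrix

section CommSemiring

variable {n R : Type*} [Fintype n] [CommSemiring R]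

def IsBalanced {L : ℕ} (W : Fin (L + 1) → Matrix n n R) : Prop :=
  ∀ i : Fin L, (W i.succ)ᵀ * W i.succ = W i.castSucc * (W i.castSucc)ᵀ

theorem IsBalanced.tail {L : ℕ} {W : Fin (L + 2) → Matrix n n R} (hW : IsBalanced W) :
    IsBalanced fun i => W i.succ :=
  fun i => hW i.succ

variable [DecidableEq n]

theorem transpose_mul_pow_mul (A : Matrix n n R) (k : ℕ) :
    Aᵀ * (A * Aᵀ) ^ k * A = (Aᵀ * A) ^ (k + 1) := by
  rw [← mul_pow_mul, mul_assoc, pow_succ]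

theorem IsBalanced.transpose_mul_self_prod_reverse_ofFn {L : ℕ}
    {W : Fin (L + 1) → Matrix n n R} (hW : IsBalanced W) :
    ((List.ofFn W).reverse.prod)ᵀ * (List.ofFn W).reverse.prod = ((W 0)ᵀ * W 0) ^ (L + 1) := by
  induction L with
  | zero => simp
  | succ L ih =>
    have hQ := ih hW.tail
    rw [List.ofFn_succ, List.reverse_cons, List.prod_append, List.prod_singleton,
      transpose_mul, mul_assoc, ← mul_assoc _ _ (W 0), hQ, hW 0, ← mul_assoc]
    exact transpose_mul_pow_mul (W 0) (L + 1)

end CommSemiring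

theorem IsBalanced.charpoly_transpose_mul_self_eq {n R : Type*} [Fintype n] [DecidableEq n]
    [CommRing R] {L : ℕ} {W : Fin (L + 1) → Matrix n n R}
    (hW : IsBalanced W) (i : Fin (L + 1)) :
    ((W i)ᵀ * W i).charpoly = ((W 0)ᵀ * W 0).charpoly := by
  induction i using Fin.induction with
  | zero => rfl
  | succ i ih => rw [hW i, charpoly_mul_comm, ih]

end Matrix

theorem prodAll_eq_prod_reverse_ofFn {d L : ℕ} (W : Fin L → Matrix (Fin d) (Fin d) ℝ) :
    prodAll W = (List.ofFn W).reverse.prod := by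
  rw [prodAll, List.map_reverse, List.ofFn_eq_map]

/-- Under balancedness, all factors have the same singular values (same
characteristic polynomial of `WᵀW`), and the singular values of the product are
the `L`-th powers of the common singular values of the factors (encoded via the
characteristic polynomial of `(W^{[0]}ᵀ W^{[0]})^L`). -/
theorem balanced_singular_values (d L : ℕ) (hL : 0 < L)
    (W : Fin L → Matrix (Fin d) (Fin d) ℝ)
    (hbal : ∀ (l : Fin L) (hl : (l : ℕ) + 1 < L),
      (W ⟨(l : ℕ) + 1, hl⟩)ᵀ * W ⟨(l : ℕ) + 1, hl⟩ = W l * (W l)ᵀ) :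
    (∀ l : Fin L, ((W l)ᵀ * W l).charpoly = ((W ⟨0, hL⟩)ᵀ * W ⟨0, hL⟩).charpoly) ∧
    ((prodAll W)ᵀ * prodAll W).charpoly = (((W ⟨0, hL⟩)ᵀ * W ⟨0, hL⟩) ^ L).charpoly := by
  obtain ⟨L, rfl⟩ : ∃ L', L = L' + 1 := Nat.exists_eq_add_one.mpr hL
  have hW : IsBalanced W := fun i => hbal i.castSucc i.succ.isLt
  refine ⟨hW.charpoly_transpose_mul_self_eq, ?_⟩
  rw [prodAll_eq_prod_reverse_ofFn, hW.transpose_mul_self_prod_reverse_ofFn]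
  rfl
end
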